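/- The Cayley transform C(X,Z,t) = ((1-t)²+|Z|²)^{-1} (2(1-t+J_Z)X, 2Z, 1-t²-|Z|²) maps the unit ball B = {(X,Z,t) ∈ v × z × ℝ : |X|²+|Z|²+t² < 1} into the Siegel domain D = {(X,Z,t) : t > (1/4)|X|²}. -/
import Mathlib


open RealInnerProductSpace

/-- The Cayley transform
`C(X,Z,t) = ((1-t)²+|Z|²)⁻¹ (2((1-t)X + J_Z X), 2Z, 1-t²-|Z|²)`. -/
noncomputable def cayley {V Z : Type*}
    [NormedAddCommGroup V] [InnerProductSpace ℝ V]
    [NormedAddCommGroup Z] [InnerProductSpace ℝ Z]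
    (J : Z →ₗ[ℝ] V →ₗ[ℝ] V) (p : V × Z × ℝ) : V × Z × ℝ :=
  (((1 - p.2.2) ^ 2 + ‖p.2.1‖ ^ 2)⁻¹ •
      ((2 : ℝ) • ((1 - p.2.2) • p.1 + J p.2.1 p.1)),
   ((1 - p.2.2) ^ 2 + ‖p.2.1‖ ^ 2)⁻¹ • ((2 : ℝ) • p.2.1),
   ((1 - p.2.2) ^ 2 + ‖p.2.1‖ ^ 2)⁻¹ * (1 - p.2.2 ^ 2 - ‖p.2.1‖ ^ 2))

lemma inner_J_self' {V Z : Type*}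
    [NormedAddCommGroup V] [InnerProductSpace ℝ V]
    [NormedAddCommGroup Z] [InnerProductSpace ℝ Z]
    (J : Z →ₗ[ℝ] V →ₗ[ℝ] V)
    (hsq : ∀ (z : Z) (x : V), J z (J z x) = -(‖z‖ ^ 2) • x)
    (hJnorm : ∀ (z : Z) (x : V), ‖J z x‖ = ‖z‖ * ‖x‖)
    (z : Z) (x : V) : ⟪J z x, x⟫ = 0 := by
  rcases eq_or_ne z 0 with rfl | hz
  · simp
  · have hz' : (0:ℝ) < ‖z‖ := norm_pos_iff.mpr hz
    have key : ‖J z (x + J z x)‖ ^ 2 = (‖z‖ * ‖x + J z x‖) ^ 2 := by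
      rw [hJnorm]
    have h2 : J z (x + J z x) = J z x - (‖z‖ ^ 2) • x := by
      rw [map_add, hsq]; module
    rw [h2] at key
    rw [mul_pow] at key
    rw [@norm_sub_sq_real, @norm_add_sq_real] at key
    rw [real_inner_smul_right, norm_smul, hJnorm] at key
    simp only [Real.norm_eq_abs, sq_abs] at key
    rw [abs_of_nonneg (sq_nonneg ‖z‖)] at key
    have hc : ⟪x, J z x⟫ = ⟪J z x, x⟫ := real_inner_comm _ _
    have h4 : ‖z‖ ^ 2 * ⟪J z x, x⟫ = 0 := by
      linear_combination (-(1:ℝ)/4) * key - (‖z‖ ^ 2 / 2) * hc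
    exact (mul_eq_zero.mp h4).resolve_left (pow_ne_zero 2 hz'.ne')

/-- The Cayley transform maps the unit ball
`B = {(X,Z,t) : |X|²+|Z|²+t² < 1}` into the Siegel domain `D = {(X,Z,t) : t > ¼|X|²}`. -/
theorem cayley_maps_ball_into_siegel {V Z : Type*}
    [NormedAddCommGroup V] [InnerProductSpace ℝ V]
    [NormedAddCommGroup Z] [InnerProductSpace ℝ Z]
    (J : Z →ₗ[ℝ] V →ₗ[ℝ] V)
    (hsq : ∀ (z : Z) (x : V), J z (J z x) = -(‖z‖ ^ 2) • x)
    (hJnorm : ∀ (z : Z) (x : V), ‖J z x‖ = ‖z‖ * ‖x‖) :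
    Set.MapsTo (cayley J)
      {p : V × Z × ℝ | ‖p.1‖ ^ 2 + ‖p.2.1‖ ^ 2 + p.2.2 ^ 2 < 1}
      {p : V × Z × ℝ | (1 / 4) * ‖p.1‖ ^ 2 < p.2.2} := by
  rintro ⟨X, Z', t⟩ hp
  simp only [Set.mem_setOf_eq] at hp ⊢
  simp only [cayley]
  set d : ℝ := (1 - t) ^ 2 + ‖Z'‖ ^ 2 with hd_def
  have ht : t < 1 := by nlinarith [sq_nonneg ‖X‖, sq_nonneg ‖Z'‖, sq_nonneg (t - 1)]
  have hd : 0 < d := by nlinarith [sq_nonneg ‖Z'‖]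
  have hw : ‖(1 - t) • X + J Z' X‖ ^ 2 = d * ‖X‖ ^ 2 := by
    rw [@norm_add_sq_real, real_inner_smul_left,
      real_inner_comm, inner_J_self' J hsq hJnorm, norm_smul, hJnorm]
    simp only [Real.norm_eq_abs, sq_abs]
    rw [mul_pow, mul_pow, sq_abs]
    ring
  have hXnorm : ‖d⁻¹ • ((2:ℝ) • ((1 - t) • X + J Z' X))‖ ^ 2 = 4 * d⁻¹ * ‖X‖ ^ 2 := by
    rw [norm_smul, norm_smul, mul_pow, mul_pow]
    simp only [Real.norm_eq_abs, sq_abs]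
    rw [hw]
    field_simp
    ring
  rw [hXnorm]
  have hinv : 0 < d⁻¹ := inv_pos.mpr hd
  have h1 : 1 - t ^ 2 - ‖Z'‖ ^ 2 - ‖X‖ ^ 2 > 0 := by nlinarith
  nlinarith [mul_pos hinv h1]
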